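/- arXiv:1201.1172 — 4 statements merged into one kernel-verified Lean document; each statement's English description precedes it below -/
import Mathlib

section
/- For density operators ρ and σ on a finite-dimensional Hilbert space, the trace distance D(ρ,σ) = ‖ρ−σ‖₁ and fidelity F(ρ,σ) = Tr √(ρ^{1/2} σ ρ^{1/2}) satisfy 2(1 − F(ρ,σ)) ≤ D(ρ,σ) ≤ 2√(1 − F(ρ,σ)²). -/
/-
Write `A = √ρ` and `B = √σ`, so that `F = ‖B A‖₁`, and recall the duality
`‖M‖₁ = max {Re Tr (W M) : Wᴴ W ≤ 1}`, the maximum being attained at the adjoint of the partial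
isometry of the polar decomposition of `M`.

Lower bound: by the Powers–Størmer inequality, `‖ρ - σ‖₁ = ‖A² - B²‖₁ ≥ Tr (A - B)² =
2 - 2 Re Tr (B A) ≥ 2 - 2 ‖B A‖₁`.

Upper bound: let `P` be the spectral projection of `ρ - σ` onto its positive part, so that
`‖ρ - σ‖₁ = 2 (a - b)` with `a = Tr P ρ`, `b = Tr P σ`. Splitting `B A = B P A + B (1 - P) A` and
applying Cauchy–Schwarz for the Hilbert–Schmidt inner product to each term gives
`F ≤ √(a b) + √((1 - a) (1 - b))`, and for two-point distributions
`(a - b)² ≤ 1 - (√(a b) + √((1 - a) (1 - b)))²` is elementary.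
-/

open Matrix
open scoped Matrix ComplexOrder

noncomputable section

/-- The positive semidefinite square root of a positive semidefinite matrix
(the definition removed from Mathlib, restated verbatim). -/
def Matrix.PosSemidef.sqrt {n : Type*} [Fintype n] [DecidableEq n] {𝕜 : Type*} [RCLike 𝕜]
    {A : Matrix n n 𝕜} (hA : A.PosSemidef) : Matrix n n 𝕜 :=
  hA.1.eigenvectorUnitary.1 * diagonal ((↑) ∘ (√·) ∘ hA.1.eigenvalues) *
  (star hA.1.eigenvectorUnitary : Matrix n n 𝕜)

/-- The trace norm `‖M‖₁ = Tr √(MᴴM)` of a complex matrix. -/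
def traceNorm {n : Type*} [Fintype n] [DecidableEq n] (M : Matrix n n ℂ) : ℝ :=
  ((Matrix.posSemidef_conjTranspose_mul_self M).sqrt).trace.re

open scoped MatrixOrder

/-- The upper Fuchs–van de Graaf bound for the two-point distributions `(a, a')` and `(b, b')`. -/
lemma sub_le_sqrt_one_sub_sq {a a' b b' F : ℝ} (ha : 0 ≤ a) (ha' : 0 ≤ a') (hb : 0 ≤ b)
    (hb' : 0 ≤ b') (haa' : a + a' = 1) (hbb' : b + b' = 1) (hF0 : 0 ≤ F)
    (hF : F ≤ √b * √a + √b' * √a') :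
    a - b ≤ √(1 - F ^ 2) := by
  obtain ⟨x, hx0, rfl⟩ : ∃ x, 0 ≤ x ∧ x ^ 2 = a := ⟨√a, Real.sqrt_nonneg _, Real.sq_sqrt ha⟩
  obtain ⟨y, hy0, rfl⟩ : ∃ y, 0 ≤ y ∧ y ^ 2 = b := ⟨√b, Real.sqrt_nonneg _, Real.sq_sqrt hb⟩
  obtain ⟨z, hz0, rfl⟩ : ∃ z, 0 ≤ z ∧ z ^ 2 = a' := ⟨√a', Real.sqrt_nonneg _, Real.sq_sqrt ha'⟩
  obtain ⟨w, hw0, rfl⟩ : ∃ w, 0 ≤ w ∧ w ^ 2 = b' := ⟨√b', Real.sqrt_nonneg _, Real.sq_sqrt hb'⟩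
  simp only [Real.sqrt_sq, hx0, hy0, hz0, hw0] at hF
  have hsum : (y * x + w * z) ^ 2 + (x * w - y * z) ^ 2 = 1 := by
    linear_combination (x ^ 2 + z ^ 2) * hbb' + haa'
  have hdiff : x ^ 2 - y ^ 2 = (x * w - y * z) * (x * w + y * z) := by
    linear_combination (-(x ^ 2)) * hbb' + y ^ 2 * haa'
  have hcs : (x * w + y * z) ^ 2 ≤ 1 := by nlinarith [sq_nonneg (x * y - z * w)]
  refine (le_abs_self _).trans (Real.abs_le_sqrt ?_)
  rw [hdiff, mul_pow]
  nlinarith [mul_le_mul_of_nonneg_left hcs (sq_nonneg (x * w - y * z)), pow_le_pow_left₀ hF0 hF 2]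

namespace Matrix

variable {n : Type*} [Fintype n]

lemma re_trace_nonneg {A : Matrix n n ℂ} (hA : 0 ≤ A) : 0 ≤ A.trace.re :=
  (Complex.nonneg_iff.mp (nonneg_iff_posSemidef.mp hA).trace_nonneg).1

lemma norm_trace_conjTranspose_mul_le (X Y : Matrix n n ℂ) :
    ‖(Xᴴ * Y).trace‖ ≤ √(Xᴴ * X).trace.re * √(Yᴴ * Y).trace.re := by
  let vec (Z : Matrix n n ℂ) : EuclideanSpace ℂ (n × n) := WithLp.toLp 2 fun p => Z p.1 p.2
  have inner_vec (Z W : Matrix n n ℂ) : inner ℂ (vec Z) (vec W) = (Zᴴ * W).trace := by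
    simp only [vec, PiLp.inner_apply, RCLike.inner_apply, trace, diag_apply, mul_apply,
      conjTranspose_apply, Fintype.sum_prod_type]
    rw [Finset.sum_comm]
    simp_rw [mul_comm, starRingEnd_apply]
  have norm_vec (Z : Matrix n n ℂ) : ‖vec Z‖ = √(Zᴴ * Z).trace.re := by
    rw [norm_eq_sqrt_re_inner (𝕜 := ℂ), inner_vec]
    rfl
  rw [← inner_vec, ← norm_vec, ← norm_vec]
  exact norm_inner_le_norm _ _

variable [DecidableEq n]

lemma continuousOn_spectrum (f : ℝ → ℝ) (A : Matrix n n ℂ) : ContinuousOn f (spectrum ℝ A) :=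
  A.finite_real_spectrum.continuousOn f

lemma cfc_mul_cfc (f g : ℝ → ℝ) (A : Matrix n n ℂ) :
    cfc f A * cfc g A = cfc (fun x => f x * g x) A :=
  (cfc_mul f g A (continuousOn_spectrum f A) (continuousOn_spectrum g A)).symm

lemma conjTranspose_sqrt (A : Matrix n n ℂ) : (CFC.sqrt A)ᴴ = CFC.sqrt A :=
  (CFC.sqrt_nonneg A).isSelfAdjoint

lemma conjTranspose_abs (M : Matrix n n ℂ) : (CFC.abs M)ᴴ = CFC.abs M :=
  (CFC.abs_nonneg M).isSelfAdjoint

lemma abs_mul_abs (M : Matrix n n ℂ) : CFC.abs M * CFC.abs M = Mᴴ * M :=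
  CFC.abs_mul_abs M

lemma PosSemidef.sqrt_eq_cfcSqrt {A : Matrix n n ℂ} (hA : A.PosSemidef) :
    hA.sqrt = CFC.sqrt A := by
  rw [CFC.sqrt_eq_cfc, cfc_nnreal_eq_real _ A hA.nonneg, hA.1.cfc_eq]
  simp only [IsHermitian.cfc, Unitary.conjStarAlgAut_apply, PosSemidef.sqrt]
  congr 3
  funext i
  simp [Real.coe_sqrt, hA.eigenvalues_nonneg i]

lemma traceNorm_eq_re_trace_abs (M : Matrix n n ℂ) : traceNorm M = (CFC.abs M).trace.re := by
  rw [traceNorm, PosSemidef.sqrt_eq_cfcSqrt, CFC.abs, star_eq_conjTranspose]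

lemma traceNorm_nonneg (M : Matrix n n ℂ) : 0 ≤ traceNorm M := by
  rw [traceNorm_eq_re_trace_abs]
  exact re_trace_nonneg (CFC.abs_nonneg M)

lemma sqrt_mul_mul_conjTranspose_eq_abs {σ : Matrix n n ℂ} (hσ : 0 ≤ σ) (A : Matrix n n ℂ) :
    CFC.sqrt (A * σ * Aᴴ) = CFC.abs (CFC.sqrt σ * Aᴴ) := by
  rw [CFC.abs, star_eq_conjTranspose, conjTranspose_mul, conjTranspose_conjTranspose,
    conjTranspose_sqrt, mul_assoc A (CFC.sqrt σ), ← mul_assoc (CFC.sqrt σ),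
    CFC.sqrt_mul_sqrt_self σ hσ, mul_assoc]

lemma re_trace_mul_nonneg {A B : Matrix n n ℂ} (hA : 0 ≤ A) (hB : 0 ≤ B) :
    0 ≤ (A * B).trace.re := by
  have htr : (A * B).trace = (CFC.sqrt A * B * CFC.sqrt A).trace := by
    rw [trace_mul_cycle, CFC.sqrt_mul_sqrt_self A hA]
  rw [htr]
  refine re_trace_nonneg ?_
  simpa [star_eq_conjTranspose, conjTranspose_sqrt] using star_left_conjugate_nonneg hB (CFC.sqrt A)

lemma re_trace_mul_le_re_trace_mul {A B C : Matrix n n ℂ} (hA : 0 ≤ A) (hBC : B ≤ C) :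
    (A * B).trace.re ≤ (A * C).trace.re := by
  have := re_trace_mul_nonneg hA (sub_nonneg.mpr hBC)
  rw [mul_sub, trace_sub, Complex.sub_re] at this
  linarith

lemma re_trace_mul_conjTranspose_mul_le {W : Matrix n n ℂ} (hW : Wᴴ * W ≤ 1)
    (X Y : Matrix n n ℂ) :
    (W * Xᴴ * Y).trace.re ≤ √(Xᴴ * X).trace.re * √(Yᴴ * Y).trace.re := by
  have hXW : ((X * Wᴴ)ᴴ * (X * Wᴴ)).trace.re ≤ (Xᴴ * X).trace.re := by
    have hcycle : ((X * Wᴴ)ᴴ * (X * Wᴴ)).trace = (Xᴴ * X * (Wᴴ * W)).trace := by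
      rw [conjTranspose_mul, conjTranspose_conjTranspose, ← trace_mul_cycle]
      simp only [mul_assoc]
    rw [hcycle]
    simpa using re_trace_mul_le_re_trace_mul (posSemidef_conjTranspose_mul_self X).nonneg hW
  calc (W * Xᴴ * Y).trace.re ≤ ‖((X * Wᴴ)ᴴ * Y).trace‖ := by
        simpa [mul_assoc] using Complex.re_le_norm _
    _ ≤ √((X * Wᴴ)ᴴ * (X * Wᴴ)).trace.re * √(Yᴴ * Y).trace.re :=
        norm_trace_conjTranspose_mul_le _ _
    _ ≤ √(Xᴴ * X).trace.re * √(Yᴴ * Y).trace.re := by gcongr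

section PseudoInverse

variable {K : Matrix n n ℂ}

lemma mul_cfc_inv_mul_self (hK : IsSelfAdjoint K) : K * cfc (·⁻¹ : ℝ → ℝ) K * K = K := by
  have hid := cfc_id' ℝ K
  calc K * cfc (·⁻¹ : ℝ → ℝ) K * K
      = cfc (fun x => x) K * cfc (·⁻¹ : ℝ → ℝ) K * cfc (fun x => x) K := by rw [hid]
    _ = cfc (fun x : ℝ => x) K := by
        rw [cfc_mul_cfc, cfc_mul_cfc]
        congr 1 with x
        rcases eq_or_ne x 0 with rfl | hx <;> field_simp
    _ = K := hid

lemma cfc_inv_mul_self_mul_cfc_inv (hK : IsSelfAdjoint K) :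
    cfc (·⁻¹ : ℝ → ℝ) K * K * cfc (·⁻¹ : ℝ → ℝ) K = cfc (·⁻¹ : ℝ → ℝ) K := by
  nth_rw 2 [← cfc_id' ℝ K]
  rw [cfc_mul_cfc, cfc_mul_cfc]
  congr 1 with x
  rcases eq_or_ne x 0 with rfl | hx <;> field_simp

lemma cfc_inv_mul_self_mul_self (hK : IsSelfAdjoint K) : cfc (·⁻¹ : ℝ → ℝ) K * K * K = K := by
  rw [((Commute.refl K).cfc_real _).eq, mul_cfc_inv_mul_self hK]

lemma conjTranspose_cfc_inv : (cfc (·⁻¹ : ℝ → ℝ) K)ᴴ = cfc (·⁻¹ : ℝ → ℝ) K :=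
  (cfc_predicate _ _ : IsSelfAdjoint _)

end PseudoInverse

/-- The partial isometry of the polar decomposition `M = polarPart M * |M|`: `cfc (·⁻¹) |M|` is the
Moore–Penrose inverse of `|M|` because `(0 : ℝ)⁻¹ = 0`. -/
def polarPart (M : Matrix n n ℂ) : Matrix n n ℂ := M * cfc (·⁻¹ : ℝ → ℝ) (CFC.abs M)

section Polar

variable (M : Matrix n n ℂ)

lemma polarPart_mul_abs : polarPart M * CFC.abs M = M := by
  set K := CFC.abs M
  set Q := 1 - cfc (·⁻¹ : ℝ → ℝ) K * K
  have hQK : Qᴴ * K = 0 := by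
    rw [conjTranspose_sub, conjTranspose_one, conjTranspose_mul, conjTranspose_abs,
      conjTranspose_cfc_inv, sub_mul, one_mul,
      mul_cfc_inv_mul_self (CFC.abs_nonneg M).isSelfAdjoint, sub_self]
  have hMQ : (M * Q)ᴴ * (M * Q) = 0 := by
    rw [conjTranspose_mul, mul_assoc, ← mul_assoc Mᴴ, ← abs_mul_abs, ← mul_assoc, ← mul_assoc, hQK,
      zero_mul, zero_mul]
  rw [conjTranspose_mul_self_eq_zero, mul_sub, mul_one, sub_eq_zero] at hMQ
  rw [polarPart, mul_assoc, ← hMQ]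

lemma conjTranspose_polarPart_mul : (polarPart M)ᴴ * M = CFC.abs M := by
  rw [polarPart, conjTranspose_mul, conjTranspose_cfc_inv, mul_assoc, ← abs_mul_abs, ← mul_assoc,
    cfc_inv_mul_self_mul_self (CFC.abs_nonneg M).isSelfAdjoint]

lemma polarPart_mul_conjTranspose_le_one : polarPart M * (polarPart M)ᴴ ≤ 1 := by
  set U := polarPart M
  set J := cfc (·⁻¹ : ℝ → ℝ) (CFC.abs M)
  have hU : U * (Uᴴ * U) = U :=
    calc U * (Uᴴ * U) = M * J * (Uᴴ * (M * J)) := rfl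
      _ = M * (J * (Uᴴ * M) * J) := by simp only [mul_assoc]
      _ = M * J := by
        rw [conjTranspose_polarPart_mul,
          cfc_inv_mul_self_mul_cfc_inv (CFC.abs_nonneg M).isSelfAdjoint]
  have hE : IsStarProjection (U * Uᴴ) :=
    { isIdempotentElem := by rw [IsIdempotentElem, ← mul_assoc, mul_assoc U, hU]
      isSelfAdjoint := by
        rw [IsSelfAdjoint, star_eq_conjTranspose, conjTranspose_mul, conjTranspose_conjTranspose] }
  exact sub_nonneg.mp hE.one_sub.nonneg

end Polar

theorem re_trace_mul_le_traceNorm {V : Matrix n n ℂ} (hV : Vᴴ * V ≤ 1) (M : Matrix n n ℂ) :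
    (V * M).trace.re ≤ traceNorm M := by
  set U := polarPart M
  set R := CFC.sqrt (CFC.abs M)
  have hRR : R * R = CFC.abs M := CFC.sqrt_mul_sqrt_self _ (CFC.abs_nonneg M)
  have hM : (R * Uᴴ)ᴴ * R = M := by
    rw [conjTranspose_mul, conjTranspose_conjTranspose, conjTranspose_sqrt, mul_assoc, hRR,
      polarPart_mul_abs]
  have hX : ((R * Uᴴ)ᴴ * (R * Uᴴ)).trace.re = traceNorm M := by
    rw [← mul_assoc, hM, trace_mul_comm, conjTranspose_polarPart_mul, traceNorm_eq_re_trace_abs]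
  have hY : (Rᴴ * R).trace.re = traceNorm M := by
    rw [conjTranspose_sqrt, hRR, traceNorm_eq_re_trace_abs]
  calc (V * M).trace.re = (V * (R * Uᴴ)ᴴ * R).trace.re := by rw [mul_assoc, hM]
    _ ≤ √((R * Uᴴ)ᴴ * (R * Uᴴ)).trace.re * √(Rᴴ * R).trace.re :=
        re_trace_mul_conjTranspose_mul_le hV _ _
    _ = traceNorm M := by rw [hX, hY, Real.mul_self_sqrt (traceNorm_nonneg M)]

theorem exists_re_trace_mul_eq_traceNorm (M : Matrix n n ℂ) :
    ∃ W : Matrix n n ℂ, Wᴴ * W ≤ 1 ∧ (W * M).trace.re = traceNorm M :=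
  ⟨(polarPart M)ᴴ, by simpa using polarPart_mul_conjTranspose_le_one M,
    by rw [conjTranspose_polarPart_mul, traceNorm_eq_re_trace_abs]⟩

/-- The Powers–Størmer inequality. -/
theorem re_trace_sub_mul_sub_le_traceNorm {A B : Matrix n n ℂ} (hA : 0 ≤ A) (hB : 0 ≤ B) :
    ((A - B) * (A - B)).trace.re ≤ traceNorm (A * A - B * B) := by
  set C := A - B
  have hC : IsSelfAdjoint C := hA.isSelfAdjoint.sub hB.isSelfAdjoint
  set S := cfc (fun x : ℝ => (SignType.sign x : ℝ)) C with hS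
  have hSC : S * C = CFC.abs C := by
    rw [hS]
    nth_rw 2 [← cfc_id' ℝ C]
    rw [cfc_mul_cfc, CFC.abs_eq_cfc_norm C]
    simp only [sign_mul_self, Real.norm_eq_abs]
  have hCS : C * S = CFC.abs C := by
    rw [← ((Commute.refl C).cfc_real _).eq, hSC]
  have hS1 : Sᴴ * S ≤ 1 := by
    rw [← star_eq_conjTranspose, hS, ← cfc_star, cfc_mul_cfc]
    exact cfc_le_one _ _ fun x _ => by cases SignType.sign x <;> simp
  -- `|C| (A + B) - C² = 2 (C⁺ B + C⁻ A)` has nonnegative trace.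
  have hsq : (C * C).trace.re ≤ (CFC.abs C * (A + B)).trace.re := by
    have h : CFC.abs C * (A + B) = (C⁺ - C⁻) * C + (C⁺ * B + C⁻ * A) + (C⁺ * B + C⁻ * A) := by
      rw [← CFC.posPart_add_negPart C]
      simp only [C]
      noncomm_ring
    rw [h, CFC.posPart_sub_negPart C]
    simp only [trace_add, Complex.add_re]
    linarith [re_trace_mul_nonneg (CFC.posPart_nonneg C) hB,
      re_trace_mul_nonneg (CFC.negPart_nonneg C) hA]
  have hS_sq : (S * (A * A - B * B)).trace = (CFC.abs C * (A + B)).trace := by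
    rw [show A * A - B * B = C * A + B * C by simp only [C]; noncomm_ring, mul_add, trace_add,
      ← mul_assoc, hSC, ← mul_assoc, trace_mul_cycle, hCS, ← trace_add, mul_add]
  calc ((A - B) * (A - B)).trace.re ≤ (CFC.abs C * (A + B)).trace.re := hsq
    _ = (S * (A * A - B * B)).trace.re := by rw [hS_sq]
    _ ≤ traceNorm (A * A - B * B) := re_trace_mul_le_traceNorm hS1 _

theorem exists_isStarProjection_re_trace_mul_eq_half_traceNorm {Δ : Matrix n n ℂ}
    (hΔ : IsSelfAdjoint Δ) (htr : Δ.trace = 0) :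
    ∃ P : Matrix n n ℂ, IsStarProjection P ∧ (P * Δ).trace.re = traceNorm Δ / 2 := by
  set f : ℝ → ℝ := fun x => if 0 < x then 1 else 0
  refine ⟨cfc f Δ, ⟨?_, cfc_predicate _ _⟩, ?_⟩
  · rw [IsIdempotentElem, cfc_mul_cfc]
    congr 1 with x
    by_cases hx : 0 < x <;> simp [f, hx]
  · have hpos : cfc f Δ * Δ = Δ⁺ := by
      nth_rw 2 [← cfc_id' ℝ Δ]
      rw [cfc_mul_cfc, CFC.posPart_def, cfcₙ_eq_cfc]
      congr 1 with x
      by_cases hx : 0 < x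
      · simp [f, hx, hx.le]
      · simp [f, hx, posPart_eq_zero.mpr (not_lt.mp hx)]
    have h1 : traceNorm Δ = (Δ⁺).trace.re + (Δ⁻).trace.re := by
      rw [traceNorm_eq_re_trace_abs, ← CFC.posPart_add_negPart Δ, trace_add, Complex.add_re]
    have h2 : (Δ⁺).trace.re - (Δ⁻).trace.re = 0 := by
      rw [← Complex.sub_re, ← trace_sub, CFC.posPart_sub_negPart Δ, htr, Complex.zero_re]
    rw [hpos, h1]
    linarith

lemma re_trace_mul_isStarProjection_mul_le {A B P W : Matrix n n ℂ} (hA : A.IsHermitian)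
    (hB : B.IsHermitian) (hP : IsStarProjection P) (hW : Wᴴ * W ≤ 1) :
    (W * (B * P * A)).trace.re ≤ √(P * (B * B)).trace.re * √(P * (A * A)).trace.re := by
  have hPh : Pᴴ = P := hP.isSelfAdjoint
  have hPP : P * P = P := hP.isIdempotentElem
  have hsq (X : Matrix n n ℂ) (hX : X.IsHermitian) :
      ((P * X)ᴴ * (P * X)).trace = (P * (X * X)).trace := by
    rw [conjTranspose_mul, hX.eq, hPh, mul_assoc, ← mul_assoc P, hPP, ← mul_assoc,
      trace_mul_cycle, trace_mul_comm]
  have hBPA : W * (P * B)ᴴ * (P * A) = W * (B * P * A) := by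
    rw [conjTranspose_mul, hB.eq, hPh, mul_assoc, mul_assoc, ← mul_assoc P, hPP]
    simp only [mul_assoc]
  have h := re_trace_mul_conjTranspose_mul_le hW (P * B) (P * A)
  rwa [hsq B hB, hsq A hA, hBPA] at h

theorem traceNorm_mul_le_of_isStarProjection {A B P : Matrix n n ℂ} (hA : A.IsHermitian)
    (hB : B.IsHermitian) (hP : IsStarProjection P) :
    traceNorm (B * A) ≤ √(P * (B * B)).trace.re * √(P * (A * A)).trace.re +
      √((1 - P) * (B * B)).trace.re * √((1 - P) * (A * A)).trace.re := by
  obtain ⟨W, hW, hWtr⟩ := exists_re_trace_mul_eq_traceNorm (B * A)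
  have hsplit : W * (B * A) = W * (B * P * A) + W * (B * (1 - P) * A) := by noncomm_ring
  rw [← hWtr, hsplit, trace_add, Complex.add_re]
  exact add_le_add (re_trace_mul_isStarProjection_mul_le hA hB hP hW)
    (re_trace_mul_isStarProjection_mul_le hA hB hP.one_sub hW)

theorem two_mul_one_sub_traceNorm_le_traceNorm_sub {ρ σ : Matrix n n ℂ} (hρ : 0 ≤ ρ) (hσ : 0 ≤ σ)
    (hρ1 : ρ.trace = 1) (hσ1 : σ.trace = 1) :
    2 * (1 - traceNorm (CFC.sqrt σ * CFC.sqrt ρ)) ≤ traceNorm (ρ - σ) := by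
  set A := CFC.sqrt ρ
  set B := CFC.sqrt σ
  have hAA : A * A = ρ := CFC.sqrt_mul_sqrt_self ρ hρ
  have hBB : B * B = σ := CFC.sqrt_mul_sqrt_self σ hσ
  have hPS := re_trace_sub_mul_sub_le_traceNorm (CFC.sqrt_nonneg ρ) (CFC.sqrt_nonneg σ)
  have hsq : ((A - B) * (A - B)).trace.re = 2 - 2 * (B * A).trace.re := by
    rw [show (A - B) * (A - B) = A * A + B * B - B * A - A * B by noncomm_ring, trace_sub,
      trace_sub, trace_add, trace_mul_comm A B, hAA, hBB, hρ1, hσ1]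
    simp only [Complex.sub_re, Complex.add_re, Complex.one_re]
    ring
  have hBA : (B * A).trace.re ≤ traceNorm (B * A) := by
    simpa using re_trace_mul_le_traceNorm (V := 1) (by simp) (B * A)
  rw [hAA, hBB, hsq] at hPS
  linarith

theorem traceNorm_sub_le_two_mul_sqrt_one_sub_sq {ρ σ : Matrix n n ℂ} (hρ : 0 ≤ ρ) (hσ : 0 ≤ σ)
    (hρ1 : ρ.trace = 1) (hσ1 : σ.trace = 1) :
    traceNorm (ρ - σ) ≤ 2 * √(1 - traceNorm (CFC.sqrt σ * CFC.sqrt ρ) ^ 2) := by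
  obtain ⟨P, hP, hPΔ⟩ := exists_isStarProjection_re_trace_mul_eq_half_traceNorm
    (hρ.isSelfAdjoint.sub hσ.isSelfAdjoint) (by rw [trace_sub, hρ1, hσ1, sub_self])
  have hF := traceNorm_mul_le_of_isStarProjection (conjTranspose_sqrt ρ) (conjTranspose_sqrt σ) hP
  rw [CFC.sqrt_mul_sqrt_self ρ hρ, CFC.sqrt_mul_sqrt_self σ hσ] at hF
  have hsum (τ : Matrix n n ℂ) (hτ1 : τ.trace = 1) :
      (P * τ).trace.re + ((1 - P) * τ).trace.re = 1 := by
    rw [← Complex.add_re, ← trace_add, ← add_mul, add_sub_cancel, one_mul, hτ1, Complex.one_re]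
  have h := sub_le_sqrt_one_sub_sq (re_trace_mul_nonneg hP.nonneg hρ)
    (re_trace_mul_nonneg hP.one_sub.nonneg hρ) (re_trace_mul_nonneg hP.nonneg hσ)
    (re_trace_mul_nonneg hP.one_sub.nonneg hσ) (hsum ρ hρ1) (hsum σ hσ1) (traceNorm_nonneg _) hF
  rw [← Complex.sub_re, ← trace_sub, ← mul_sub, hPΔ] at h
  linarith

end Matrix

/-- For density matrices `ρ, σ`, with `D = ‖ρ - σ‖₁` and the fidelity
`F = Tr √(ρ^{1/2} σ ρ^{1/2})` (note `(ρ^{1/2})ᴴ = ρ^{1/2}`), we have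
`2(1-F) ≤ D ≤ 2√(1-F²)`. -/
theorem trace_distance_fidelity_bounds (d : ℕ)
    (ρ σ : Matrix (Fin d) (Fin d) ℂ)
    (hρ : ρ.PosSemidef) (hσ : σ.PosSemidef)
    (hρ1 : ρ.trace = 1) (hσ1 : σ.trace = 1)
    (F : ℝ)
    (hF : F = ((hσ.mul_mul_conjTranspose_same hρ.sqrt).sqrt).trace.re) :
    2 * (1 - F) ≤ traceNorm (ρ - σ) ∧
      traceNorm (ρ - σ) ≤ 2 * Real.sqrt (1 - F ^ 2) := by
  have hFρσ : F = traceNorm (CFC.sqrt σ * CFC.sqrt ρ) := by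
    rw [hF, PosSemidef.sqrt_eq_cfcSqrt, hρ.sqrt_eq_cfcSqrt,
      sqrt_mul_mul_conjTranspose_eq_abs hσ.nonneg, conjTranspose_sqrt, traceNorm_eq_re_trace_abs]
  rw [hFρσ]
  exact ⟨two_mul_one_sub_traceNorm_le_traceNorm_sub hρ.nonneg hσ.nonneg hρ1 hσ1,
    traceNorm_sub_le_two_mul_sqrt_one_sub_sq hρ.nonneg hσ.nonneg hρ1 hσ1⟩
end
end

section
/- Let Φ be a quantum channel on d×d matrices with K(Φ) ∩ U(d) = ∅ and C_Φ = min_{L ∈ K(Φ)} (1/d) Tr(|L| − I_d)² > 0, and let Ψ be a Schur channel on m×m matrices. Then any element L of the Kraus operator space of Ψ ⊗ Φ decomposes as a direct sum L = ⊕_{k=1}^m L_k with each L_k ∈ K(Φ), and consequently C_{Ψ⊗Φ} ≥ C_Φ. -/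
open Matrix
open scoped Matrix ComplexOrder Kronecker

noncomputable section

/-- The absolute value `|L| = √(LᴴL)` of a complex matrix. -/
def matrixAbs {n : Type*} [Fintype n] [DecidableEq n] (L : Matrix n n ℂ) :
    Matrix n n ℂ :=
  (Matrix.posSemidef_conjTranspose_mul_self L).1.eigenvectorUnitary.1 *
    diagonal ((↑) ∘ (√·) ∘ (Matrix.posSemidef_conjTranspose_mul_self L).1.eigenvalues) *
    (star (Matrix.posSemidef_conjTranspose_mul_self L).1.eigenvectorUnitary : Matrix n n ℂ)

/-!
The Kraus operators `diagonal (D a) ⊗ₖ E j` of `Ψ ⊗ Φ` are block diagonal with blocks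
`D a k • E j ∈ K(Φ)`, so every element of their span is block diagonal with blocks in `K(Φ)`.
Since `|L|` is the unique positive semidefinite square root of `LᴴL`, it is computed blockwise, and
so is `Tr (|L| - 1)²`; averaging the bounds `C_Φ ≤ (1/d) Tr (|L_k| - 1)²` over the `m` blocks
gives `C_{Ψ⊗Φ} ≥ C_Φ`.
-/

open scoped MatrixOrder

namespace Matrix

lemma trace_reindex {n o R : Type*} [Fintype n] [Fintype o] [AddCommMonoid R]
    (e : n ≃ o) (A : Matrix n n R) :
    trace (reindex e e A) = trace A := by
  simp only [Matrix.trace, diag_apply, reindex_apply, submatrix_apply]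
  exact e.symm.sum_comp fun i => A i i

section MatrixAbs

variable {n o : Type*} [Fintype n] [DecidableEq n] [Fintype o] [DecidableEq o]

lemma matrixAbs_eq_cfcSqrt (L : Matrix n n ℂ) : matrixAbs L = CFC.sqrt (Lᴴ * L) := by
  rw [CFC.sqrt_eq_real_sqrt _ (posSemidef_conjTranspose_mul_self L).nonneg, cfcₙ_eq_cfc,
    (posSemidef_conjTranspose_mul_self L).1.cfc_eq, IsHermitian.cfc,
    Unitary.conjStarAlgAut_apply]
  rfl

lemma posSemidef_matrixAbs (L : Matrix n n ℂ) : (matrixAbs L).PosSemidef := by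
  rw [matrixAbs_eq_cfcSqrt]
  exact (CFC.sqrt_nonneg _).posSemidef

lemma matrixAbs_mul_self (L : Matrix n n ℂ) : matrixAbs L * matrixAbs L = Lᴴ * L := by
  rw [matrixAbs_eq_cfcSqrt]
  exact CFC.sqrt_mul_sqrt_self _ (posSemidef_conjTranspose_mul_self L).nonneg

lemma matrixAbs_eq_of_mul_self {L A : Matrix n n ℂ} (hA : A.PosSemidef) (h : A * A = Lᴴ * L) :
    matrixAbs L = A := by
  rw [matrixAbs_eq_cfcSqrt]
  exact CFC.sqrt_unique h hA.nonneg

lemma matrixAbs_reindex (e : n ≃ o) (L : Matrix n n ℂ) :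
    matrixAbs (reindex e e L) = reindex e e (matrixAbs L) := by
  refine matrixAbs_eq_of_mul_self ((posSemidef_submatrix_equiv _).mpr (posSemidef_matrixAbs L)) ?_
  rw [conjTranspose_reindex, ← coe_reindexAlgEquiv ℂ ℂ, ← map_mul, ← map_mul, matrixAbs_mul_self]

lemma PosSemidef.blockDiagonal {M : o → Matrix n n ℂ} (hM : ∀ k, (M k).PosSemidef) :
    (blockDiagonal M).PosSemidef := by
  choose B hB using fun k => CStarAlgebra.nonneg_iff_eq_star_mul_self.mp (hM k).nonneg
  have hMB : Matrix.blockDiagonal M = (Matrix.blockDiagonal B)ᴴ * Matrix.blockDiagonal B := by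
    rw [blockDiagonal_conjTranspose, ← blockDiagonal_mul]
    exact congrArg _ (funext hB)
  exact hMB ▸ posSemidef_conjTranspose_mul_self _

lemma matrixAbs_blockDiagonal (M : o → Matrix n n ℂ) :
    matrixAbs (blockDiagonal M) = blockDiagonal fun k => matrixAbs (M k) := by
  refine matrixAbs_eq_of_mul_self (.blockDiagonal fun k => posSemidef_matrixAbs (M k)) ?_
  simp only [blockDiagonal_conjTranspose, ← blockDiagonal_mul, matrixAbs_mul_self]

lemma trace_sq_matrixAbs_sub_one_reindex (e : n ≃ o) (L : Matrix n n ℂ) :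
    trace ((matrixAbs (reindex e e L) - 1) ^ 2) = trace ((matrixAbs L - 1) ^ 2) := by
  rw [matrixAbs_reindex, ← coe_reindexAlgEquiv ℂ ℂ, ← map_one (reindexAlgEquiv ℂ ℂ e), ← map_sub,
    ← map_pow, coe_reindexAlgEquiv, trace_reindex]

lemma trace_sq_matrixAbs_sub_one_blockDiagonal (M : o → Matrix n n ℂ) :
    trace ((matrixAbs (blockDiagonal M) - 1) ^ 2) = ∑ k, trace ((matrixAbs (M k) - 1) ^ 2) := by
  rw [matrixAbs_blockDiagonal, ← blockDiagonal_one, ← blockDiagonal_sub, ← blockDiagonal_pow,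
    trace_blockDiagonal]
  rfl

end MatrixAbs

/- `blockDiagonal` puts the block index last; `prodComm` moves it to the front, where
`diagonal a ⊗ₖ B` has it. -/
theorem exists_blockDiagonal_of_mem_span_diagonal_kronecker {R κ ι l m n : Type*} [CommSemiring R]
    [DecidableEq l] (D : κ → l → R) (E : ι → Matrix m n R) {L : Matrix (l × m) (l × n) R}
    (hL : L ∈ Submodule.span R (Set.range fun aj : κ × ι => diagonal (D aj.1) ⊗ₖ E aj.2)) :
    ∃ M : l → Matrix m n R, (∀ k, M k ∈ Submodule.span R (Set.range E)) ∧
      L = reindex (.prodComm ..) (.prodComm ..) (blockDiagonal M) := by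
  induction hL using Submodule.span_induction with
  | mem _ hx =>
    obtain ⟨⟨a, j⟩, rfl⟩ := hx
    exact ⟨fun k => D a k • E j, fun k => Submodule.smul_mem _ _ (Submodule.subset_span ⟨j, rfl⟩),
      diagonal_kronecker _ _⟩
  | zero => exact ⟨0, fun k => Submodule.zero_mem _, by simp⟩
  | add _ _ _ _ ihx ihy =>
    obtain ⟨Mx, hMx, rfl⟩ := ihx
    obtain ⟨My, hMy, rfl⟩ := ihy
    exact ⟨Mx + My, fun k => Submodule.add_mem _ (hMx k) (hMy k),
      by simp [blockDiagonal_add, submatrix_add]⟩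
  | smul c _ _ ih =>
    obtain ⟨M, hM, rfl⟩ := ih
    exact ⟨c • M, fun k => Submodule.smul_mem _ c (hM k),
      by simp [blockDiagonal_smul, submatrix_smul]⟩

end Matrix

theorem kraus_space_of_schur_tensor_channel_general (m d : ℕ) (hm : 0 < m) {ι κ : Type*}
    (E : ι → Matrix (Fin d) (Fin d) ℂ) (D : κ → (Fin m → ℂ)) (CΦ : ℝ)
    (hC : ∀ L ∈ Submodule.span ℂ (Set.range E),
      CΦ ≤ (1 / d : ℝ) * (((matrixAbs L - 1) ^ 2).trace).re) :
    ∀ L ∈ Submodule.span ℂ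
        (Set.range fun aj : κ × ι =>
          (Matrix.diagonal (D aj.1)) ⊗ₖ E aj.2),
      (∃ Lk : Fin m → Matrix (Fin d) (Fin d) ℂ,
        (∀ k, Lk k ∈ Submodule.span ℂ (Set.range E)) ∧
        ∀ k i k' j, L (k, i) (k', j) = if k = k' then Lk k i j else 0) ∧
      CΦ ≤ (1 / (m * d) : ℝ) * (((matrixAbs L - 1) ^ 2).trace).re := by
  intro L hL
  obtain ⟨Lk, hLk, rfl⟩ := exists_blockDiagonal_of_mem_span_diagonal_kronecker D E hL
  refine ⟨⟨Lk, hLk, fun _ _ _ _ => rfl⟩, ?_⟩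
  have hmean := Finset.le_expect ⟨⟨0, hm⟩, Finset.mem_univ _⟩ fun k _ => hC (Lk k) (hLk k)
  rw [Finset.expect_eq_sum_div_card, ← Finset.mul_sum, Finset.card_univ, Fintype.card_fin] at hmean
  rw [trace_sq_matrixAbs_sub_one_reindex, trace_sq_matrixAbs_sub_one_blockDiagonal, Complex.re_sum]
  exact hmean.trans_eq (by ring)

/-- If `Ψ` is a Schur channel on `m×m` matrices (with diagonal Kraus
operators `diagonal (D a)`) and `Φ` is a channel on `d×d` matrices with Kraus
operators `E j`, then every element of the Kraus operator space of `Ψ ⊗ Φ`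
(spanned by the `diagonal (D a) ⊗ₖ E j`) is a direct sum `⊕ₖ Lₖ` with `Lₖ ∈ K(Φ)`,
and consequently `C_{Ψ⊗Φ} ≥ C_Φ`. -/
theorem kraus_space_of_schur_tensor_channel (m d : ℕ) (hm : 0 < m) (hd : 0 < d)
    {ι κ : Type*} [Fintype ι] [Fintype κ]
    (E : ι → Matrix (Fin d) (Fin d) ℂ)
    (hkrausE : ∑ j, (E j)ᴴ * E j = 1)
    (hnounitary : ∀ L ∈ Submodule.span ℂ (Set.range E),
      L ∉ Matrix.unitaryGroup (Fin d) ℂ)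
    (D : κ → (Fin m → ℂ))
    (hkrausD : ∑ a, (Matrix.diagonal (D a))ᴴ * Matrix.diagonal (D a) = 1)
    (CΦ : ℝ) (hCΦ : 0 < CΦ)
    (hC : ∀ L ∈ Submodule.span ℂ (Set.range E),
      CΦ ≤ (1 / d : ℝ) * (((matrixAbs L - 1) ^ 2).trace).re) :
    ∀ L ∈ Submodule.span ℂ
        (Set.range fun aj : κ × ι =>
          (Matrix.diagonal (D aj.1)) ⊗ₖ E aj.2),
      (∃ Lk : Fin m → Matrix (Fin d) (Fin d) ℂ,
        (∀ k, Lk k ∈ Submodule.span ℂ (Set.range E)) ∧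
        ∀ k i k' j, L (k, i) (k', j) = if k = k' then Lk k i j else 0) ∧
      CΦ ≤ (1 / (m * d) : ℝ) * (((matrixAbs L - 1) ^ 2).trace).re :=
  kraus_space_of_schur_tensor_channel_general m d hm E D CΦ hC
end
end

section
/- Let Φ be the map on 4×4 matrices given by Φ(X) = E₁XE₁† + E₂XE₂† with E₁ = Diag(1, 0, 1/√2, 1/√2) and E₂ = Diag(0, 1, 1/√2, −i/√2). Then Φ is a unital quantum channel (indeed a Schur channel) and the span of {E₁, E₂} contains no unitary matrix. -/
/-!
Both Kraus operators are diagonal, `E_k = diagonal d_k`, so `Φ` is the Schur multiplier with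
symbol `∑ d_k d_kᴴ`, which is positive semidefinite, and trace preservation and unitality both
reduce to `∑ |d_k i|² = 1` for every `i`. A unitary `a E₁ + b E₂` would have unimodular diagonal,
so `|a| = |b| = 1` and `|a + b|² = |a - i b|² = 2`; then `a` is orthogonal to both `b` and `i b`
in `ℝ²`, which forces `a b̄ = 0`.
-/

open Matrix
open scoped Matrix ComplexOrder

noncomputable section

/-- The first Kraus operator `E₁ = Diag(1, 0, 1/√2, 1/√2)`. -/
def E₁ : Matrix (Fin 4) (Fin 4) ℂ :=
  Matrix.diagonal ![1, 0, ((Real.sqrt 2 : ℂ))⁻¹, ((Real.sqrt 2 : ℂ))⁻¹]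

/-- The second Kraus operator `E₂ = Diag(0, 1, 1/√2, -i/√2)`. -/
def E₂ : Matrix (Fin 4) (Fin 4) ℂ :=
  Matrix.diagonal ![0, 1, ((Real.sqrt 2 : ℂ))⁻¹, -Complex.I / (Real.sqrt 2 : ℂ)]

open ComplexConjugate

namespace Matrix

variable {ι n R : Type*} [Fintype ι] [Fintype n] [DecidableEq n]

section CommSemiring

variable [CommSemiring R] [StarRing R]

theorem conjTranspose_diagonal_mul_diagonal (v : n → R) :
    (diagonal v)ᴴ * diagonal v = diagonal fun i => star (v i) * v i := by
  rw [diagonal_conjTranspose, diagonal_mul_diagonal, Pi.star_def]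

theorem sum_conjTranspose_diagonal_mul_diagonal (d : ι → n → R) :
    ∑ k, (diagonal (d k))ᴴ * diagonal (d k) = diagonal fun i => ∑ k, star (d k i) * d k i := by
  ext i j
  rw [Matrix.sum_apply]
  by_cases h : i = j <;> simp [h]

theorem sum_diagonal_mul_conjTranspose_diagonal (d : ι → n → R) :
    ∑ k, diagonal (d k) * (diagonal (d k))ᴴ = ∑ k, (diagonal (d k))ᴴ * diagonal (d k) := by
  simp_rw [diagonal_conjTranspose, (commute_diagonal _ _).eq]

theorem sum_diagonal_mul_mul_conjTranspose_diagonal (d : ι → n → R) (X : Matrix n n R) :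
    ∑ k, diagonal (d k) * X * (diagonal (d k))ᴴ = (∑ k, vecMulVec (d k) (star (d k))) ⊙ X := by
  ext i j
  simp [Matrix.sum_apply, Finset.sum_mul, vecMulVec_apply, mul_right_comm]

end CommSemiring

theorem diagonal_mem_unitaryGroup_iff [CommRing R] [StarRing R] (v : n → R) :
    diagonal v ∈ unitaryGroup n R ↔ ∀ i, star (v i) * v i = 1 := by
  rw [mem_unitaryGroup_iff', star_eq_conjTranspose, conjTranspose_diagonal_mul_diagonal,
    ← diagonal_one, diagonal_eq_diagonal_iff]

end Matrix

namespace Complex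

theorem eq_zero_or_eq_zero_of_normSq_add_eq {a b : ℂ}
    (h₁ : normSq (a + b) = normSq a + normSq b)
    (h₂ : normSq (a - I * b) = normSq a + normSq b) : a = 0 ∨ b = 0 := by
  have hre : (a * conj b).re = 0 := by rw [normSq_add] at h₁; linarith
  have him : (a * conj b).im = 0 := by
    rw [normSq_sub, normSq_mul, normSq_I, one_mul, map_mul, conj_I] at h₂
    simp only [mul_re, mul_im, neg_re, neg_im, I_re, I_im, conj_re, conj_im] at h₂ ⊢
    linarith
  simpa using (Complex.ext hre him : a * conj b = 0)

theorem normSq_mul_inv_sqrt_two (z : ℂ) : normSq (z * (Real.sqrt 2 : ℂ)⁻¹) = normSq z / 2 := by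
  rw [normSq_mul, normSq_inv, normSq_ofReal, Real.mul_self_sqrt zero_le_two, div_eq_mul_inv]

end Complex

def krausDiag : Fin 2 → Fin 4 → ℂ :=
  ![![1, 0, ((Real.sqrt 2 : ℂ))⁻¹, ((Real.sqrt 2 : ℂ))⁻¹],
    ![0, 1, ((Real.sqrt 2 : ℂ))⁻¹, -Complex.I / (Real.sqrt 2 : ℂ)]]

theorem sum_star_krausDiag_mul_self (i : Fin 4) :
    ∑ k, star (krausDiag k i) * krausDiag k i = 1 := by
  simp only [Fin.sum_univ_two, Complex.star_def, ← Complex.normSq_eq_conj_mul_self]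
  fin_cases i <;> simp [krausDiag, div_eq_mul_inv, Complex.normSq_mul_inv_sqrt_two] <;> norm_num

theorem diagonal_smul_krausDiag_add_not_mem_unitaryGroup (a b : ℂ) :
    diagonal (a • krausDiag 0 + b • krausDiag 1) ∉ unitaryGroup (Fin 4) ℂ := by
  intro hU
  have hunit (i : Fin 4) : Complex.normSq (a * krausDiag 0 i + b * krausDiag 1 i) = 1 := by
    exact_mod_cast Complex.normSq_eq_conj_mul_self.trans ((diagonal_mem_unitaryGroup_iff _).mp hU i)
  have ha := hunit 0
  have hb := hunit 1
  have hsum := hunit 2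
  have hdiff := hunit 3
  simp only [krausDiag, Fin.isValue, Matrix.cons_val, mul_one, mul_zero, add_zero, zero_add]
    at ha hb hsum hdiff
  rw [← add_mul, Complex.normSq_mul_inv_sqrt_two] at hsum
  rw [show a * (Real.sqrt 2 : ℂ)⁻¹ + b * (-Complex.I / Real.sqrt 2)
      = (a - Complex.I * b) * (Real.sqrt 2 : ℂ)⁻¹ by ring, Complex.normSq_mul_inv_sqrt_two] at hdiff
  rcases Complex.eq_zero_or_eq_zero_of_normSq_add_eq (by linarith) (by linarith) with rfl | rfl
    <;> simp at ha hb

/-- `Φ(X) = E₁XE₁ᴴ + E₂XE₂ᴴ` is a unital quantum channel (indeed a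
Schur channel), and the span of `{E₁, E₂}` contains no unitary matrix. -/
theorem example_channel_no_unitary_in_kraus_space :
    (E₁ᴴ * E₁ + E₂ᴴ * E₂ = 1) ∧
    (E₁ * E₁ᴴ + E₂ * E₂ᴴ = 1) ∧
    (∃ S : Matrix (Fin 4) (Fin 4) ℂ, S.PosSemidef ∧ (∀ k, S k k = 1) ∧
      ∀ X, E₁ * X * E₁ᴴ + E₂ * X * E₂ᴴ = S.hadamard X) ∧
    (∀ L ∈ Submodule.span ℂ ({E₁, E₂} : Set (Matrix (Fin 4) (Fin 4) ℂ)),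
      L ∉ Matrix.unitaryGroup (Fin 4) ℂ) := by
  rw [show E₁ = diagonal (krausDiag 0) from rfl, show E₂ = diagonal (krausDiag 1) from rfl]
  have trace_preserving : ∑ k, (diagonal (krausDiag k))ᴴ * diagonal (krausDiag k) = 1 := by
    simp_rw [sum_conjTranspose_diagonal_mul_diagonal, sum_star_krausDiag_mul_self, diagonal_one]
  refine ⟨by simpa only [Fin.sum_univ_two] using trace_preserving, ?_, ?_, ?_⟩
  · simpa only [Fin.sum_univ_two] using
      (sum_diagonal_mul_conjTranspose_diagonal krausDiag).trans trace_preserving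
  · refine ⟨∑ k, vecMulVec (krausDiag k) (star (krausDiag k)),
      posSemidef_sum _ fun k _ => posSemidef_vecMulVec_self_star _, fun i => ?_, fun X => ?_⟩
    · simpa [Matrix.sum_apply, vecMulVec_apply, mul_comm] using sum_star_krausDiag_mul_self i
    · simpa only [Fin.sum_univ_two] using sum_diagonal_mul_mul_conjTranspose_diagonal krausDiag X
  · intro L hL
    obtain ⟨a, b, rfl⟩ := Submodule.mem_span_pair.mp hL
    rw [← diagonal_smul, ← diagonal_smul, diagonal_add]
    exact diagonal_smul_krausDiag_add_not_mem_unitaryGroup a b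
end
end

section
/- Let K_d^+ be the least constant K such that every positive Schur multiplier of norm at most 1 on d×d matrices lies in K·Conv(𝔻_d^+), and let K_{d,1}^+ be the least constant K such that every Schur channel lies in K·Conv(𝔻_d^+). Then K_{d,1}^+ = K_d^+ for all d. -/
open Matrix
open scoped Matrix ComplexOrder

noncomputable section

/-- `𝕊_d⁺`: positive Schur multipliers of norm at most one, i.e. matrices `S` that are
Gram matrices of vectors in the unit ball; equivalently `S` positive semidefinite with
diagonal entries at most `1`. -/
def posSchurBall (d : ℕ) : Set (Matrix (Fin d) (Fin d) ℂ) :=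
  {S | S.PosSemidef ∧ ∀ k, (S k k).re ≤ 1}

/-- Schur channels: `S` positive semidefinite with unit diagonal. -/
def schurChannels (d : ℕ) : Set (Matrix (Fin d) (Fin d) ℂ) :=
  {S | S.PosSemidef ∧ ∀ k, S k k = 1}

/-- `𝔻_d⁺`: rank-one Schur multipliers `s_{kj} = αₖ* αⱼ` with `|αₖ| ≤ 1`. -/
def Dplus (d : ℕ) : Set (Matrix (Fin d) (Fin d) ℂ) :=
  {S | ∃ α : Fin d → ℂ, (∀ k, ‖α k‖ ≤ 1) ∧
    S = Matrix.of fun k j => star (α k) * α j}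

/-!
A matrix `S ∈ 𝕊_d⁺` is the Gram matrix of vectors `ξₖ` with `‖ξₖ‖ ≤ 1`. Writing
`ξₖ = ‖ξₖ‖ uₖ` with unit vectors `uₖ` gives `S = C ⊙ S'`, where `S' = [⟨uₖ, uⱼ⟩]` is a Schur
channel and `C = [‖ξₖ‖ ‖ξⱼ‖] ∈ 𝔻_d⁺`. Since `𝔻_d⁺` is closed under Schur products, Schur
multiplication by `C` maps `K · Conv(𝔻_d⁺)` into itself, so a constant that works for Schur
channels works for all of `𝕊_d⁺`; the converse holds because Schur channels lie in `𝕊_d⁺`.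
-/

section Gram

open scoped MatrixOrder InnerProductSpace

variable {𝕜 n : Type*} [RCLike 𝕜]

theorem Matrix.PosSemidef.exists_eq_gram [Fintype n] {S : Matrix n n 𝕜} (hS : S.PosSemidef) :
    ∃ v : n → EuclideanSpace 𝕜 n, S = gram 𝕜 v := by
  classical
  obtain ⟨B, rfl⟩ := CStarAlgebra.nonneg_iff_eq_star_mul_self.mp hS.nonneg
  refine ⟨fun k => WithLp.toLp 2 fun i => B i k, ?_⟩
  ext k j
  simp [mul_apply, EuclideanSpace.inner_eq_star_dotProduct, dotProduct, mul_comm]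

theorem exists_norm_eq_one_and_eq_norm_smul {E : Type*} [NormedAddCommGroup E]
    [InnerProductSpace 𝕜 E] [Nontrivial E] (x : E) :
    ∃ u : E, ‖u‖ = 1 ∧ x = (‖x‖ : 𝕜) • u := by
  by_cases hx : x = 0
  · obtain ⟨y, hy⟩ := exists_ne (0 : E)
    exact ⟨_, norm_smul_inv_norm (𝕜 := 𝕜) hy, by simp [hx]⟩
  · refine ⟨_, norm_smul_inv_norm (𝕜 := 𝕜) hx, ?_⟩
    rw [smul_smul, mul_inv_cancel₀ (RCLike.ofReal_ne_zero.mpr (norm_ne_zero_iff.mpr hx)),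
      one_smul]

theorem gram_eq_hadamard_gram_of_eq_norm_smul {E : Type*} [NormedAddCommGroup E]
    [InnerProductSpace 𝕜 E] {v u : n → E} (hvu : ∀ k, v k = (‖v k‖ : 𝕜) • u k) :
    gram 𝕜 v = (of fun k j => (‖v k‖ : 𝕜) * ‖v j‖) ⊙ gram 𝕜 u := by
  ext k j
  conv_lhs => rw [gram_apply, hvu k, hvu j, inner_smul_left, inner_smul_right, RCLike.conj_ofReal]
  simp only [hadamard, of_apply, gram_apply, mul_assoc]

end Gram

theorem hadamard_mem_Dplus {d : ℕ} {C T : Matrix (Fin d) (Fin d) ℂ} (hC : C ∈ Dplus d)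
    (hT : T ∈ Dplus d) : C ⊙ T ∈ Dplus d := by
  obtain ⟨α, hα, rfl⟩ := hC
  obtain ⟨β, hβ, rfl⟩ := hT
  refine ⟨α * β, fun k => ?_, ?_⟩
  · simpa using mul_le_one₀ (hα k) (norm_nonneg _) (hβ k)
  · ext k j
    simp only [hadamard, of_apply, Pi.mul_apply, star_mul']
    ring

theorem hadamard_mem_convexHull_Dplus {d : ℕ} {C T : Matrix (Fin d) (Fin d) ℂ}
    (hC : C ∈ Dplus d) (hT : T ∈ convexHull ℝ (Dplus d)) :
    C ⊙ T ∈ convexHull ℝ (Dplus d) := by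
  have hlin : IsLinearMap ℝ (C ⊙ · : Matrix (Fin d) (Fin d) ℂ → _) :=
    ⟨fun _ _ => hadamard_add _ _ _, fun _ _ => hadamard_smul _ _ _⟩
  have hmaps : (C ⊙ ·) '' Dplus d ⊆ Dplus d :=
    Set.image_subset_iff.mpr fun _ => hadamard_mem_Dplus hC
  exact convexHull_mono hmaps (hlin.image_convexHull _ ▸ Set.mem_image_of_mem _ hT)

theorem schurChannels_subset_posSchurBall (d : ℕ) : schurChannels d ⊆ posSchurBall d :=
  fun _ hS => ⟨hS.1, fun k => by simp [hS.2 k]⟩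

theorem exists_hadamard_eq_of_mem_posSchurBall {d : ℕ} {S : Matrix (Fin d) (Fin d) ℂ}
    (hS : S ∈ posSchurBall d) : ∃ C ∈ Dplus d, ∃ S' ∈ schurChannels d, S = C ⊙ S' := by
  rcases isEmpty_or_nonempty (Fin d) with hd | hd
  · exact ⟨S, ⟨0, isEmptyElim, Subsingleton.elim _ _⟩, S, ⟨hS.1, isEmptyElim⟩,
      Subsingleton.elim _ _⟩
  obtain ⟨v, rfl⟩ := hS.1.exists_eq_gram
  choose u hu hvu using fun k => exists_norm_eq_one_and_eq_norm_smul (𝕜 := ℂ) (v k)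
  have hv : ∀ k, ‖v k‖ ≤ 1 := fun k => by
    have hk := hS.2 k
    rw [gram_apply, inner_self_eq_norm_sq_to_K] at hk
    exact (sq_le_one_iff₀ (norm_nonneg _)).mp (by exact_mod_cast hk)
  refine ⟨_, ⟨fun k => ‖v k‖, fun k => by simpa using hv k, rfl⟩, gram ℂ u,
    ⟨posSemidef_gram ℂ u, fun k => by simp [hu k]⟩, ?_⟩
  rw [gram_eq_hadamard_gram_of_eq_norm_smul hvu]
  simp [Complex.conj_ofReal]

/-- the least constant `K` with `𝕊_d⁺ ⊆ K · Conv(𝔻_d⁺)` equals the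
least constant `K` with `{Schur channels} ⊆ K · Conv(𝔻_d⁺)`, i.e. `K_d⁺ = K_{d,1}⁺`. -/
theorem Kd_plus_eq_Kd_one_plus (d : ℕ) :
    sInf {K : ℝ | 0 ≤ K ∧ ∀ S ∈ posSchurBall d,
        ∃ T ∈ convexHull ℝ (Dplus d), S = K • T} =
      sInf {K : ℝ | 0 ≤ K ∧ ∀ S ∈ schurChannels d,
        ∃ T ∈ convexHull ℝ (Dplus d), S = K • T} := by
  congr 1
  ext K
  refine and_congr_right fun _ => ⟨fun h S hS => h S (schurChannels_subset_posSchurBall d hS),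
    fun h S hS => ?_⟩
  obtain ⟨C, hC, S', hS', rfl⟩ := exists_hadamard_eq_of_mem_posSchurBall hS
  obtain ⟨T, hT, rfl⟩ := h S' hS'
  exact ⟨C ⊙ T, hadamard_mem_convexHull_Dplus hC hT, hadamard_smul _ _ _⟩
end
end
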